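/- If the base-b expansion of n ends in exactly r ≥ 0 zeros, so n = m·b^r with b not dividing m, then the number of dismal divisors of n equals (r+1) times the number of dismal divisors of m. -/

import Mathlib

/-- The `i`-th base-`b` digit of `n`. -/
def digit (b n i : ℕ) : ℕ := n / b ^ i % b

/-- Dismal addition in base `b`: digitwise maximum of base-`b` digits. -/
def dadd (b m n : ℕ) : ℕ :=
  ∑ i ∈ Finset.range (m + n + 1), max (digit b m i) (digit b n i) * b ^ i

/-- Dismal multiplication in base `b`: digit convolution with `min` as digit
product and `max` as digit sum (no carries). -/
def dmul (b m n : ℕ) : ℕ :=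
  ∑ k ∈ Finset.range (m + n + 1),
    ((Finset.range (k + 1)).sup fun i => min (digit b m i) (digit b n (k - i))) * b ^ k

/-- The number of base-`b` digits of `n`. -/
def dlen (b n : ℕ) : ℕ := (Nat.digits b n).length

/-- `p` dismally divides `n` in base `b`. -/
def DDvd (b p n : ℕ) : Prop := ∃ q, dmul b p q = n

open scoped Classical in
/-- The finite set of dismal divisors of `n` (every dismal divisor of a
nonzero `n` has at most `dlen b n` digits). -/
noncomputable def ddivisors (b n : ℕ) : Finset ℕ :=
  (Finset.range (b ^ dlen b n)).filter fun p => DDvd b p n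

/-- The dismal sum of a finite set of numbers: digitwise supremum. -/
def ddigitSum (b : ℕ) (S : Finset ℕ) : ℕ :=
  ∑ i ∈ Finset.range (S.sup id + 1), (S.sup fun p => digit b p i) * b ^ i

/-- The number of dismal divisors of `n` in base `b`. -/
noncomputable def dnum (b n : ℕ) : ℕ := (ddivisors b n).card

/-!
Dismal multiplication shifts like ordinary multiplication,
`dmul b (p * b ^ s) (q * b ^ t) = dmul b p q * b ^ (s + t)`, and its last digit is the minimum
of the last digits of the factors, so `b ∣ dmul b p q` iff `b` divides one of the factors.
Stripping the trailing zeros from the factors of a dismal factorization of `m * b ^ r` therefore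
gives a factorization of `m`, the zeros being split as `s + t = r`. Hence the dismal divisors of
`m * b ^ r` are exactly the numbers `d * b ^ s` with `d` a dismal divisor of `m` and `s ≤ r`, and
these are pairwise distinct because no dismal divisor of `m` is divisible by `b`.
-/

open Finset

section

variable {b : ℕ}

lemma digit_zero_eq_mod (n : ℕ) : digit b n 0 = n % b := by
  simp [digit]

lemma digit_succ (n i : ℕ) : digit b n (i + 1) = digit b (n / b) i := by
  rw [digit, digit, Nat.div_div_eq_div_mul, pow_succ']

lemma digit_eq_zero_of_lt {n i : ℕ} (h : n < b ^ i) : digit b n i = 0 := by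
  simp [digit, Nat.div_eq_of_lt h]

lemma digit_eq_zero_of_le (hb : 2 ≤ b) {n i : ℕ} (h : n ≤ i) : digit b n i = 0 :=
  digit_eq_zero_of_lt ((Nat.lt_pow_self hb).trans_le (Nat.pow_le_pow_right (by omega) h))

lemma le_log_of_digit_ne_zero (hb : 2 ≤ b) {n i : ℕ} (h : digit b n i ≠ 0) :
    i ≤ Nat.log b n :=
  Nat.le_log_of_pow_le hb (not_lt.1 (mt digit_eq_zero_of_lt h))

lemma digit_log_ne_zero (hb : 2 ≤ b) {n : ℕ} (hn : n ≠ 0) : digit b n (Nat.log b n) ≠ 0 := by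
  have hpos : 0 < b ^ Nat.log b n := by positivity
  have hlo : 1 ≤ n / b ^ Nat.log b n :=
    (Nat.one_le_div_iff hpos).2 (Nat.pow_log_le_self b hn)
  have hhi : n / b ^ Nat.log b n < b :=
    Nat.div_lt_of_lt_mul (by rw [← pow_succ]; exact Nat.lt_pow_succ_log_self hb n)
  rw [digit, Nat.mod_eq_of_lt hhi]
  omega

lemma digit_mul_base_zero (n : ℕ) : digit b (n * b) 0 = 0 := by
  simp [digit_zero_eq_mod]

lemma digit_mul_base_succ (hb : 0 < b) (n i : ℕ) : digit b (n * b) (i + 1) = digit b n i := by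
  rw [digit_succ, Nat.mul_div_cancel _ hb]

lemma digit_sum_mul_pow (hb : 0 < b) {f : ℕ → ℕ} (hf : ∀ i, f i < b) (N k : ℕ) :
    digit b (∑ i ∈ range N, f i * b ^ i) k = if k < N then f k else 0 := by
  induction N generalizing f k with
  | zero => simp [digit]
  | succ N ih =>
    have hsplit : ∑ i ∈ range (N + 1), f i * b ^ i
        = f 0 + b * ∑ i ∈ range N, f (i + 1) * b ^ i := by
      rw [sum_range_succ', mul_sum]
      simp only [pow_succ', pow_zero, mul_one]
      rw [add_comm]
      congr 1
      exact sum_congr rfl fun i _ => by ring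
    cases k with
    | zero => simp [hsplit, digit_zero_eq_mod, Nat.mod_eq_of_lt (hf 0)]
    | succ k =>
      rw [hsplit, digit_succ, Nat.add_mul_div_left _ _ hb, Nat.div_eq_of_lt (hf 0), zero_add,
        ih fun i => hf (i + 1)]
      simp

lemma sum_digit_mul_pow_eq_mod (n N : ℕ) :
    ∑ k ∈ range N, digit b n k * b ^ k = n % b ^ N := by
  induction N with
  | zero => simp [Nat.mod_one]
  | succ N ih => rw [Nat.mod_pow_succ, sum_range_succ, ih, digit, mul_comm]

lemma digit_ext (hb : 2 ≤ b) {x y : ℕ} (h : ∀ k, digit b x k = digit b y k) : x = y := by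
  have hlt : ∀ z ≤ x + y, z < b ^ (x + y) := fun z hz =>
    (Nat.lt_pow_self hb).trans_le (Nat.pow_le_pow_right (by omega) hz)
  calc x = x % b ^ (x + y) := (Nat.mod_eq_of_lt (hlt x (by omega))).symm
    _ = y % b ^ (x + y) := by
      simp only [← sum_digit_mul_pow_eq_mod, h]
    _ = y := Nat.mod_eq_of_lt (hlt y (by omega))

lemma multiplicity_mul_pow_of_not_dvd {d : ℕ} (hb : 0 < b) (hd : ¬ b ∣ d) (s : ℕ) :
    multiplicity b (d * b ^ s) = s := by
  refine multiplicity_eq_of_dvd_of_not_dvd (Dvd.intro_left d rfl) ?_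
  rwa [pow_succ', Nat.mul_dvd_mul_iff_right (by positivity)]

lemma eq_and_eq_of_mul_pow_eq_mul_pow {d d' s s' : ℕ} (hb : 0 < b) (hd : ¬ b ∣ d)
    (hd' : ¬ b ∣ d') (h : d * b ^ s = d' * b ^ s') : d = d' ∧ s = s' := by
  obtain rfl : s = s' := by
    rw [← multiplicity_mul_pow_of_not_dvd hb hd s, h, multiplicity_mul_pow_of_not_dvd hb hd' s']
  exact ⟨Nat.eq_of_mul_eq_mul_right (by positivity) h, rfl⟩

def dconv (b p q k : ℕ) : ℕ :=
  (range (k + 1)).sup fun i => min (digit b p i) (digit b q (k - i))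

lemma dconv_lt (hb : 0 < b) (p q k : ℕ) : dconv b p q k < b :=
  (Finset.sup_lt_iff hb).2 fun _ _ => (min_le_left _ _).trans_lt (Nat.mod_lt _ hb)

lemma dconv_eq_zero_of_lt (hb : 2 ≤ b) {p q k : ℕ} (h : p + q < k) : dconv b p q k = 0 := by
  refine Nat.eq_zero_of_le_zero (Finset.sup_le fun i hi => ?_)
  rw [mem_range] at hi
  rcases le_or_gt p i with hpi | hip
  · simp [digit_eq_zero_of_le hb hpi]
  · simp [digit_eq_zero_of_le hb (show q ≤ k - i by omega)]

lemma digit_dmul (hb : 2 ≤ b) (p q k : ℕ) : digit b (dmul b p q) k = dconv b p q k := by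
  change digit b (∑ k ∈ range (p + q + 1), dconv b p q k * b ^ k) k = _
  rw [digit_sum_mul_pow (by omega) (dconv_lt (by omega) p q)]
  split_ifs with h
  · rfl
  · exact (dconv_eq_zero_of_lt hb (by omega)).symm

lemma dmul_zero (p : ℕ) : dmul b p 0 = 0 := by
  simp [dmul, digit]

lemma zero_dmul (q : ℕ) : dmul b 0 q = 0 := by
  simp [dmul, digit]

lemma left_ne_zero_of_dmul {p q : ℕ} (h : dmul b p q ≠ 0) : p ≠ 0 := by
  rintro rfl
  exact h (zero_dmul q)

lemma right_ne_zero_of_dmul {p q : ℕ} (h : dmul b p q ≠ 0) : q ≠ 0 := by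
  rintro rfl
  exact h (dmul_zero p)

lemma dmul_mod_base (hb : 2 ≤ b) (p q : ℕ) : dmul b p q % b = min (p % b) (q % b) := by
  rw [← digit_zero_eq_mod, digit_dmul hb]
  simp [dconv, digit_zero_eq_mod]

lemma base_dvd_dmul_iff (hb : 2 ≤ b) {p q : ℕ} : b ∣ dmul b p q ↔ b ∣ p ∨ b ∣ q := by
  simp only [Nat.dvd_iff_mod_eq_zero, dmul_mod_base hb, Nat.min_eq_zero_iff]

lemma dconv_mul_base_left_succ (hb : 0 < b) (p q k : ℕ) :
    dconv b (p * b) q (k + 1) = dconv b p q k := by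
  rw [dconv, range_add_one', sup_insert, sup_map, digit_mul_base_zero, Nat.zero_min, Nat.zero_max]
  refine sup_congr rfl fun i _ => ?_
  change min (digit b (p * b) (i + 1)) (digit b q (k + 1 - (i + 1))) = _
  rw [digit_mul_base_succ hb, Nat.add_sub_add_right]

lemma dconv_mul_base_right_succ (hb : 0 < b) (p q k : ℕ) :
    dconv b p (q * b) (k + 1) = dconv b p q k := by
  rw [dconv, range_add_one, sup_insert, Nat.sub_self, digit_mul_base_zero, Nat.min_zero,
    Nat.zero_max]
  refine sup_congr rfl fun i hi => ?_
  rw [show k + 1 - i = k - i + 1 by grind, digit_mul_base_succ hb]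

lemma dmul_mul_base_left (hb : 2 ≤ b) (p q : ℕ) : dmul b (p * b) q = dmul b p q * b :=
  digit_ext hb fun k => by
    cases k with
    | zero => simp [digit_dmul hb, dconv, digit_mul_base_zero]
    | succ k =>
      rw [digit_dmul hb, dconv_mul_base_left_succ (by omega), digit_mul_base_succ (by omega),
        digit_dmul hb]

lemma dmul_mul_base_right (hb : 2 ≤ b) (p q : ℕ) : dmul b p (q * b) = dmul b p q * b :=
  digit_ext hb fun k => by
    cases k with
    | zero => simp [digit_dmul hb, dconv, digit_mul_base_zero]
    | succ k =>
      rw [digit_dmul hb, dconv_mul_base_right_succ (by omega), digit_mul_base_succ (by omega),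
        digit_dmul hb]

lemma dmul_mul_pow_right (hb : 2 ≤ b) (p q t : ℕ) : dmul b p (q * b ^ t) = dmul b p q * b ^ t := by
  induction t with
  | zero => simp
  | succ t ih => rw [pow_succ, ← mul_assoc, dmul_mul_base_right hb, ih, mul_assoc]

lemma dmul_mul_pow (hb : 2 ≤ b) (p q s t : ℕ) :
    dmul b (p * b ^ s) (q * b ^ t) = dmul b p q * b ^ (s + t) := by
  induction s with
  | zero => simp [dmul_mul_pow_right hb]
  | succ s ih =>
    rw [pow_succ, ← mul_assoc, dmul_mul_base_left hb, ih, mul_assoc, ← pow_succ, add_right_comm]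

lemma dconv_log_add_log_ne_zero (hb : 2 ≤ b) {p q : ℕ} (hp : p ≠ 0) (hq : q ≠ 0) :
    dconv b p q (Nat.log b p + Nat.log b q) ≠ 0 := by
  have hmem : Nat.log b p ∈ range (Nat.log b p + Nat.log b q + 1) := by
    rw [mem_range]; omega
  have hle :=
    le_sup (f := fun i => min (digit b p i) (digit b q (Nat.log b p + Nat.log b q - i))) hmem
  simp only [Nat.add_sub_cancel_left] at hle
  have := digit_log_ne_zero hb hp
  have := digit_log_ne_zero hb hq
  rw [dconv]
  omega

lemma lt_pow_dlen_of_ddvd (hb : 2 ≤ b) {p n : ℕ} (hn : n ≠ 0) (h : DDvd b p n) :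
    p < b ^ dlen b n := by
  obtain ⟨q, rfl⟩ := h
  have hp := left_ne_zero_of_dmul hn
  have hq := right_ne_zero_of_dmul hn
  have hlog : Nat.log b p + Nat.log b q ≤ Nat.log b (dmul b p q) :=
    le_log_of_digit_ne_zero hb (by rw [digit_dmul hb]; exact dconv_log_add_log_ne_zero hb hp hq)
  rw [dlen, Nat.length_digits b _ hb hn]
  exact (Nat.lt_pow_succ_log_self hb p).trans_le (Nat.pow_le_pow_right (by omega) (by omega))

open scoped Classical in
lemma mem_ddivisors (hb : 2 ≤ b) {p n : ℕ} (hn : n ≠ 0) : p ∈ ddivisors b n ↔ DDvd b p n := by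
  rw [ddivisors, mem_filter, mem_range]
  exact ⟨And.right, fun h => ⟨lt_pow_dlen_of_ddvd hb hn h, h⟩⟩

lemma not_dvd_of_ddvd (hb : 2 ≤ b) {d m : ℕ} (hm : ¬ b ∣ m) (h : DDvd b d m) : ¬ b ∣ d := by
  obtain ⟨q, rfl⟩ := h
  exact fun hd => hm ((base_dvd_dmul_iff hb).2 (Or.inl hd))

/-- Strip the trailing zeros from both factors: as `b ∣ dmul b d e` only if `b ∣ d` or `b ∣ e`,
the stripped factors multiply to `m` and the stripped zeros add up to `r`. -/
lemma ddvd_mul_pow_iff (hb : 2 ≤ b) {m p : ℕ} (hm : ¬ b ∣ m) (r : ℕ) :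
    DDvd b p (m * b ^ r) ↔ ∃ s ≤ r, ∃ d, DDvd b d m ∧ p = d * b ^ s := by
  constructor
  · rintro ⟨q, hpq⟩
    have hn : dmul b p q ≠ 0 := by
      rw [hpq]
      exact mul_ne_zero (by rintro rfl; exact hm (dvd_zero b)) (by positivity)
    obtain ⟨s, d, hd, rfl⟩ :=
      Nat.exists_eq_pow_mul_and_not_dvd (left_ne_zero_of_dmul hn) b (by omega)
    obtain ⟨t, e, he, rfl⟩ :=
      Nat.exists_eq_pow_mul_and_not_dvd (right_ne_zero_of_dmul hn) b (by omega)
    rw [mul_comm _ d, mul_comm _ e, dmul_mul_pow hb] at hpq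
    have hde : ¬ b ∣ dmul b d e := by
      rw [base_dvd_dmul_iff hb]
      tauto
    obtain ⟨hdm, hst⟩ := eq_and_eq_of_mul_pow_eq_mul_pow (by omega) hde hm hpq
    exact ⟨s, by omega, d, ⟨e, hdm⟩, mul_comm _ _⟩
  · rintro ⟨s, hs, d, ⟨q, hdq⟩, rfl⟩
    refine ⟨q * b ^ (r - s), ?_⟩
    rw [dmul_mul_pow hb, hdq, Nat.add_sub_cancel' hs]

end

/-- trailing zeros multiply the number of dismal divisors. -/
theorem dismal_divisors_trailing_zeros (b : ℕ) (hb : 2 ≤ b) (m r : ℕ)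
    (hm : ¬ b ∣ m) : dnum b (m * b ^ r) = (r + 1) * dnum b m := by
  have hm0 : m ≠ 0 := by
    rintro rfl
    exact hm (dvd_zero b)
  have hinj : Set.InjOn (fun x : ℕ × ℕ => x.2 * b ^ x.1) ↑(range (r + 1) ×ˢ ddivisors b m) := by
    rintro ⟨s, d⟩ hx ⟨s', d'⟩ hx' h
    simp only [coe_product, Set.mem_prod, mem_coe, mem_ddivisors hb hm0] at hx hx'
    obtain ⟨rfl, rfl⟩ := eq_and_eq_of_mul_pow_eq_mul_pow (by omega)
      (not_dvd_of_ddvd hb hm hx.2) (not_dvd_of_ddvd hb hm hx'.2) h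
    rfl
  have himage : ddivisors b (m * b ^ r)
      = (range (r + 1) ×ˢ ddivisors b m).image fun x => x.2 * b ^ x.1 := by
    ext p
    rw [mem_ddivisors hb (mul_ne_zero hm0 (pow_ne_zero r (by omega))), ddvd_mul_pow_iff hb hm]
    simp only [mem_image, mem_product, mem_range, mem_ddivisors hb hm0, Prod.exists]
    grind
  rw [dnum, dnum, himage, card_image_of_injOn hinj, card_product, card_range]
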